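/- Let b ∈ (0,1/2), α ∈ (0,3) and r ∈ (0,∞). Then φ_{r,α}(θ2) > 0 for every θ2 > 0, and if (κ, η, θ2), (κ*, η*, θ2*) ∈ ℝ × ℝ × (0,∞) satisfy e^{−κy − ηz} φ_{r,α}(θ2) = e^{−κ*y − η*z} φ_{r,α}(θ2*) for all y, z ∈ [b, 1−b], then κ = κ*, η = η* and θ2 = θ2*. -/

import Mathlib

open Set MeasureTheory

/-- The Bessel function of the first kind of order 0, via its power series. -/
noncomputable def J0 (x : ℝ) : ℝ :=
  ∑' k : ℕ, (-1 : ℝ) ^ k / ((Nat.factorial k : ℝ)) ^ 2 * (x / 2) ^ (2 * k)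

/-- `φ_{r,α}(θ2)` of the paper. -/
noncomputable def phiRA (r α θ2 : ℝ) : ℝ :=
  2 / (θ2 ^ (1 - α) * Real.pi) *
    ∫ x in Set.Ioi (0 : ℝ),
      (1 - Real.exp (-x ^ 2)) / x ^ (1 + 2 * α) *
        (J0 (Real.sqrt 2 * r * x / Real.sqrt θ2) - 2 * J0 (r * x / Real.sqrt θ2) + 1)

/-! Expanding `J0` termwise and integrating against Wallis' integrals gives Bessel's formula
`2π J0 x = ∫₀^{2π} cos (x cos θ) dθ`. The angles `x (cos θ ± sin θ)` are rotations of
`√2 x cos θ`, so `J0 (√2 a) - 2 J0 a + 1` is the mean of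
`(1 - cos (a cos θ)) (1 - cos (a sin θ))`: it is nonnegative, at most `min 4 (a⁴/4)`, and positive
for `0 < a < 2π`.

The substitution `x = √θ2 u` turns `φ_{r,α}(θ2)` into
`(2/π) ∫₀^∞ (1 - e^{-θ2 u²})/θ2 · w(u) du` with a weight `w ≥ 0` that is positive near `0`; the
integral converges for `0 < α < 3` by the two bounds above. Since `(1 - e^{-θ2 c})/θ2` is a
secant slope of `exp`, it is strictly decreasing in `θ2`, so `φ_{r,α}` is positive and strictly
decreasing, hence injective. Taking logarithms at the corners of `[b, 1 - b]²` separates `κ`, `η`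
and `φ_{r,α}(θ2)`.
-/

open Real

theorem integral_cos_pow_two_mul (k : ℕ) :
    ∫ θ in (0:ℝ)..2 * π, cos θ ^ (2 * k) =
      2 * π * (2 * k).factorial / (4 ^ k * (k.factorial : ℝ) ^ 2) := by
  induction k with
  | zero => simp
  | succ k ih =>
    rw [show 2 * (k + 1) = 2 * k + 2 by ring, integral_cos_pow, ih, sin_two_pi, sin_zero,
      show 2 * k + 2 = (2 * k + 1) + 1 by ring, Nat.factorial_succ, Nat.factorial_succ,
      Nat.factorial_succ]
    push_cast
    field_simp
    ring

theorem two_pi_mul_J0 (x : ℝ) : 2 * π * J0 x = ∫ θ in (0:ℝ)..2 * π, cos (x * cos θ) := by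
  set F : ℕ → ℝ → ℝ := fun k θ => (-1) ^ k * (x * cos θ) ^ (2 * k) / (2 * k).factorial
  have hF_int : ∀ k, Integrable (F k) (volume.restrict (Ioc 0 (2 * π))) := fun k =>
    (by fun_prop : Continuous (F k)).integrableOn_Ioc
  have hF_le : ∀ k θ, ‖F k θ‖ ≤ |(-1) ^ k * x ^ (2 * k) / (2 * k).factorial| := fun k θ => by
    simp only [F, norm_eq_abs, abs_div, abs_mul, abs_pow]
    gcongr
    exact mul_le_of_le_one_right (abs_nonneg x) (abs_cos_le_one θ)
  have hF_sum : Summable fun k => ∫ θ in Ioc 0 (2 * π), ‖F k θ‖ := by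
    refine .of_nonneg_of_le (fun k => integral_nonneg fun θ => norm_nonneg _) (fun k => ?_)
      ((Real.hasSum_cos x).summable.abs.mul_left (2 * π))
    calc ∫ θ in Ioc 0 (2 * π), ‖F k θ‖
        ≤ ∫ θ in Ioc 0 (2 * π), |(-1) ^ k * x ^ (2 * k) / (2 * k).factorial| :=
          integral_mono (hF_int k).norm (integrableOn_const measure_Ioc_lt_top.ne) (hF_le k)
      _ = _ := by simp [two_pi_pos.le]
  have hF_integral : ∀ k, ∫ θ in Ioc 0 (2 * π), F k θ
      = 2 * π * ((-1) ^ k / (k.factorial : ℝ) ^ 2 * (x / 2) ^ (2 * k)) := fun k => by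
    simp only [F, mul_pow, ← intervalIntegral.integral_of_le two_pi_pos.le]
    rw [intervalIntegral.integral_div, intervalIntegral.integral_const_mul,
      intervalIntegral.integral_const_mul, integral_cos_pow_two_mul, div_pow,
      show (4 : ℝ) ^ k = 2 ^ (2 * k) by rw [pow_mul]; norm_num]
    field_simp
  have hsum := hasSum_integral_of_summable_integral_norm hF_int hF_sum
  have hF_tsum : ∀ θ, ∑' k, F k θ = cos (x * cos θ) := fun θ => (Real.hasSum_cos _).tsum_eq
  simp only [hF_integral, hF_tsum] at hsum
  have hJ0 := (hsum.mul_left (2 * π)⁻¹).tsum_eq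
  simp only [← mul_assoc, inv_mul_cancel₀ two_pi_pos.ne', one_mul] at hJ0
  rw [J0, hJ0, intervalIntegral.integral_of_le two_pi_pos.le]
  field_simp

theorem integral_cos_mul_cos_add (c d : ℝ) :
    ∫ θ in (0:ℝ)..2 * π, cos (c * cos (θ + d)) = 2 * π * J0 c := by
  have hper : Function.Periodic (fun θ => cos (c * cos θ)) (2 * π) := fun θ => by
    simp only [cos_add_two_pi]
  rw [two_pi_mul_J0, intervalIntegral.integral_comp_add_right (fun θ => cos (c * cos θ)),
    zero_add, add_comm, hper.intervalIntegral_add_eq d 0, zero_add]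

@[fun_prop]
theorem continuous_J0 : Continuous J0 := by
  have h : J0 = fun x => (2 * π)⁻¹ * ∫ θ in (0:ℝ)..2 * π, cos (x * cos θ) := by
    ext x
    rw [← two_pi_mul_J0, inv_mul_cancel_left₀ two_pi_pos.ne']
  rw [h]
  exact continuous_const.mul
    (intervalIntegral.continuous_parametric_intervalIntegral_of_continuous' (by fun_prop) _ _)

noncomputable def besselDiff (a : ℝ) : ℝ := J0 (√2 * a) - 2 * J0 a + 1

@[fun_prop]
theorem continuous_besselDiff : Continuous besselDiff := by
  unfold besselDiff
  fun_prop

theorem two_pi_mul_besselDiff (a : ℝ) :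
    2 * π * besselDiff a =
      ∫ θ in (0:ℝ)..2 * π, (1 - cos (a * cos θ)) * (1 - cos (a * sin θ)) := by
  have hsqrt : √2 * √2 = 2 := mul_self_sqrt zero_le_two
  -- `cos A * cos B = (cos (A + B) + cos (A - B)) / 2`, and each angle is a rotated `c * cos θ`
  have hexpand : ∀ θ, (1 - cos (a * cos θ)) * (1 - cos (a * sin θ)) =
      1 - cos (a * cos (θ + 0)) - cos (a * cos (θ + -(π / 2)))
        + (cos (√2 * a * cos (θ + -(π / 4))) + cos (√2 * a * cos (θ + π / 4))) / 2 :=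
      fun θ => by
    have hsum : √2 * a * cos (θ + -(π / 4)) = a * cos θ + a * sin θ := by
      rw [cos_add, cos_neg, sin_neg, cos_pi_div_four, sin_pi_div_four]
      linear_combination (a * cos θ + a * sin θ) / 2 * hsqrt
    have hdiff : √2 * a * cos (θ + π / 4) = a * cos θ - a * sin θ := by
      rw [cos_add, cos_pi_div_four, sin_pi_div_four]
      linear_combination (a * cos θ - a * sin θ) / 2 * hsqrt
    rw [add_zero, ← sub_eq_add_neg, cos_sub_pi_div_two, hsum, hdiff, cos_add, cos_sub]
    ring
  have hint : ∀ c d, IntervalIntegrable (fun θ => cos (c * cos (θ + d))) volume 0 (2 * π) :=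
    fun c d => (by fun_prop : Continuous _).intervalIntegrable _ _
  simp only [hexpand]
  rw [intervalIntegral.integral_add (((intervalIntegrable_const).sub (hint _ _)).sub (hint _ _))
      (((hint _ _).add (hint _ _)).div_const _),
    intervalIntegral.integral_sub ((intervalIntegrable_const).sub (hint _ _)) (hint _ _),
    intervalIntegral.integral_sub intervalIntegrable_const (hint _ _),
    intervalIntegral.integral_div, intervalIntegral.integral_add (hint _ _) (hint _ _)]
  simp only [integral_cos_mul_cos_add, intervalIntegral.integral_const, sub_zero, smul_eq_mul,
    mul_one, besselDiff]
  ring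

theorem besselDiff_nonneg (a : ℝ) : 0 ≤ besselDiff a := by
  have hint : 0 ≤ ∫ θ in (0:ℝ)..2 * π, (1 - cos (a * cos θ)) * (1 - cos (a * sin θ)) :=
    intervalIntegral.integral_nonneg two_pi_pos.le fun θ _ =>
      mul_nonneg (sub_nonneg.2 (cos_le_one _)) (sub_nonneg.2 (cos_le_one _))
  rw [← two_pi_mul_besselDiff] at hint
  exact nonneg_of_mul_nonneg_right hint two_pi_pos

theorem besselDiff_le_of_forall_le {a C : ℝ}
    (h : ∀ θ, (1 - cos (a * cos θ)) * (1 - cos (a * sin θ)) ≤ C) : besselDiff a ≤ C := by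
  have hint :
      ∫ θ in (0:ℝ)..2 * π, (1 - cos (a * cos θ)) * (1 - cos (a * sin θ)) ≤ 2 * π * C := by
    simpa using intervalIntegral.integral_mono_on two_pi_pos.le
      ((by fun_prop : Continuous _).intervalIntegrable _ _)
      (intervalIntegrable_const (μ := volume)) fun θ _ => h θ
  rw [← two_pi_mul_besselDiff] at hint
  exact le_of_mul_le_mul_left hint two_pi_pos

theorem besselDiff_le_four (a : ℝ) : besselDiff a ≤ 4 :=
  besselDiff_le_of_forall_le fun θ => by
    nlinarith [neg_one_le_cos (a * cos θ), neg_one_le_cos (a * sin θ),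
      cos_le_one (a * cos θ), cos_le_one (a * sin θ)]

theorem besselDiff_le_pow_four (a : ℝ) : besselDiff a ≤ a ^ 4 / 4 :=
  besselDiff_le_of_forall_le fun θ => by
    have hc := one_sub_sq_div_two_le_cos (x := a * cos θ)
    have hs := one_sub_sq_div_two_le_cos (x := a * sin θ)
    calc (1 - cos (a * cos θ)) * (1 - cos (a * sin θ))
        ≤ (a * cos θ) ^ 2 / 2 * ((a * sin θ) ^ 2 / 2) :=
          mul_le_mul (by linarith) (by linarith) (sub_nonneg.2 (cos_le_one _)) (by positivity)
      _ = a ^ 4 / 4 * (cos θ * sin θ) ^ 2 := by ring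
      _ ≤ a ^ 4 / 4 := by
          refine mul_le_of_le_one_right (by positivity) ?_
          nlinarith [sin_sq_add_cos_sq θ, sq_nonneg (cos θ ^ 2 - sin θ ^ 2)]

theorem besselDiff_pos {a : ℝ} (ha : 0 < a) (ha' : a < 2 * π) : 0 < besselDiff a := by
  have hcos : cos (a * (√2 / 2)) < 1 := by
    refine lt_of_le_of_ne (cos_le_one _) fun h => ?_
    have hlt : √2 / 2 < 1 := by
      rw [div_lt_one two_pos, sqrt_lt' two_pos]; norm_num
    have h0 := (cos_eq_one_iff_of_lt_of_lt (by nlinarith [sqrt_nonneg 2]) (by nlinarith)).1 h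
    have : 0 < a * (√2 / 2) := by positivity
    linarith
  have hint : ∫ θ in (0:ℝ)..2 * π, (0:ℝ) <
      ∫ θ in (0:ℝ)..2 * π, (1 - cos (a * cos θ)) * (1 - cos (a * sin θ)) := by
    refine intervalIntegral.integral_lt_integral_of_continuousOn_of_le_of_exists_lt two_pi_pos
      continuousOn_const (by fun_prop) (fun θ _ => mul_nonneg (sub_nonneg.2 (cos_le_one _))
        (sub_nonneg.2 (cos_le_one _))) ⟨π / 4, ⟨by positivity, by linarith [pi_pos]⟩, ?_⟩
    rw [cos_pi_div_four, sin_pi_div_four]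
    nlinarith
  rw [intervalIntegral.integral_zero, ← two_pi_mul_besselDiff] at hint
  exact pos_of_mul_pos_right hint two_pi_pos.le

theorem setIntegral_lt_setIntegral_of_le_of_lt_on {X : Type*} [MeasurableSpace X] {μ : Measure X}
    {f g : X → ℝ} {s t : Set X} (hs : MeasurableSet s) (hts : t ⊆ s) (ht : μ t ≠ 0)
    (hf : IntegrableOn f s μ) (hg : IntegrableOn g s μ) (hle : ∀ x ∈ s, f x ≤ g x)
    (hlt : ∀ x ∈ t, f x < g x) : ∫ x in s, f x ∂μ < ∫ x in s, g x ∂μ := by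
  rw [← sub_pos, ← integral_sub hg hf,
    setIntegral_pos_iff_support_of_nonneg_ae (f := fun x => g x - f x) _ (hg.sub hf)]
  · refine (pos_iff_ne_zero.2 ht).trans_le (measure_mono fun x hx => ⟨?_, hts hx⟩)
    exact (sub_pos.2 (hlt x hx)).ne'
  · exact (ae_restrict_iff' hs).2 (ae_of_all _ fun x hx => sub_nonneg.2 (hle x hx))

theorem one_sub_exp_neg_mul_div_lt {c s t : ℝ} (hc : 0 < c) (hs : 0 < s) (hst : s < t) :
    (1 - exp (-(t * c))) / t < (1 - exp (-(s * c))) / s := by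
  have ht := hs.trans hst
  -- `(1 - e^{-tc}) / t` is `c` times the slope of the secant of `exp` through `-tc` and `0`
  have key := strictConvexOn_exp.secant_strict_mono (a := 0) (x := -(t * c)) (y := -(s * c))
    trivial trivial trivial (neg_ne_zero.2 (mul_pos ht hc).ne') (neg_ne_zero.2 (mul_pos hs hc).ne')
    (by nlinarith)
  rw [exp_zero] at key
  calc (1 - exp (-(t * c))) / t = c * ((exp (-(t * c)) - 1) / (-(t * c) - 0)) := by
        field_simp; ring
    _ < c * ((exp (-(s * c)) - 1) / (-(s * c) - 0)) := mul_lt_mul_of_pos_left key hc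
    _ = (1 - exp (-(s * c))) / s := by field_simp; ring

theorem one_sub_exp_neg_mul_div_nonneg {c t : ℝ} (hc : 0 ≤ c) (ht : 0 < t) :
    0 ≤ (1 - exp (-(t * c))) / t :=
  div_nonneg (sub_nonneg.2 (exp_le_one_iff.2 (by nlinarith))) ht.le

theorem one_sub_exp_neg_mul_div_le {c t : ℝ} (ht : 0 < t) : (1 - exp (-(t * c))) / t ≤ c := by
  rw [div_le_iff₀ ht]
  linarith [add_one_le_exp (-(t * c))]

theorem one_sub_exp_neg_mul_div_le_inv {c t : ℝ} (ht : 0 < t) :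
    (1 - exp (-(t * c))) / t ≤ t⁻¹ := by
  rw [div_eq_mul_inv]
  exact mul_le_of_le_one_left (inv_nonneg.2 ht.le) (by linarith [exp_pos (-(t * c))])

noncomputable def phiIntegrand (r α t u : ℝ) : ℝ :=
  (1 - exp (-(t * u ^ 2))) / t * (besselDiff (r * u) / u ^ (1 + 2 * α))

theorem phiIntegrand_nonneg (r α : ℝ) {t u : ℝ} (ht : 0 < t) (hu : 0 < u) :
    0 ≤ phiIntegrand r α t u :=
  mul_nonneg (one_sub_exp_neg_mul_div_nonneg (sq_nonneg u) ht)
    (div_nonneg (besselDiff_nonneg _) (rpow_nonneg hu.le _))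

theorem besselDiff_mul_pos {r u : ℝ} (hr : 0 < r) (hu : u ∈ Ioo 0 (2 * π / r)) :
    0 < besselDiff (r * u) :=
  besselDiff_pos (mul_pos hr hu.1) (by rw [mul_comm]; exact (lt_div_iff₀ hr).1 hu.2)

theorem phiIntegrand_pos (α : ℝ) {r t u : ℝ} (hr : 0 < r) (ht : 0 < t)
    (hu : u ∈ Ioo 0 (2 * π / r)) : 0 < phiIntegrand r α t u :=
  mul_pos (div_pos (sub_pos.2 (exp_lt_one_iff.2 (neg_lt_zero.2 (by have := hu.1; positivity)))) ht)
    (div_pos (besselDiff_mul_pos hr hu) (rpow_pos_of_pos hu.1 _))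

theorem phiIntegrand_lt_of_lt (α : ℝ) {r s t u : ℝ} (hr : 0 < r) (hs : 0 < s) (hst : s < t)
    (hu : u ∈ Ioo 0 (2 * π / r)) : phiIntegrand r α t u < phiIntegrand r α s u :=
  mul_lt_mul_of_pos_right (one_sub_exp_neg_mul_div_lt (pow_pos hu.1 2) hs hst)
    (div_pos (besselDiff_mul_pos hr hu) (rpow_pos_of_pos hu.1 _))

theorem phiIntegrand_le_of_le (r α : ℝ) {s t u : ℝ} (hs : 0 < s) (hst : s ≤ t) (hu : 0 < u) :
    phiIntegrand r α t u ≤ phiIntegrand r α s u := by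
  rcases hst.eq_or_lt with rfl | hst
  · rfl
  exact mul_le_mul_of_nonneg_right (one_sub_exp_neg_mul_div_lt (by positivity) hs hst).le
    (div_nonneg (besselDiff_nonneg _) (rpow_nonneg hu.le _))

theorem continuousOn_phiIntegrand (r α t : ℝ) : ContinuousOn (phiIntegrand r α t) (Ioi 0) := by
  refine (Continuous.continuousOn (by fun_prop)).mul (ContinuousOn.div (by fun_prop) ?_ ?_)
  · exact continuousOn_id.rpow_const fun u hu => Or.inl (ne_of_gt hu)
  · exact fun u hu => (rpow_pos_of_pos hu _).ne'

theorem integrableOn_phiIntegrand (r : ℝ) {α t : ℝ} (hα : 0 < α) (hα3 : α < 3) (ht : 0 < t) :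
    IntegrableOn (phiIntegrand r α t) (Ioi 0) := by
  have hmeas : ∀ s ⊆ Ioi 0, MeasurableSet s →
      AEStronglyMeasurable (phiIntegrand r α t) (volume.restrict s) := fun s hs hsm =>
    ((continuousOn_phiIntegrand r α t).mono hs).aestronglyMeasurable hsm
  have hweight : ∀ {u}, 0 < u → 0 ≤ besselDiff (r * u) / u ^ (1 + 2 * α) := fun hu =>
    div_nonneg (besselDiff_nonneg _) (rpow_nonneg hu.le _)
  rw [← Ioc_union_Ioi_eq_Ioi zero_le_one]
  refine IntegrableOn.union ?_ ?_
  · refine Integrable.mono' (((intervalIntegral.intervalIntegrable_rpow' (a := 0) (b := 1)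
      (show -1 < 5 - 2 * α by linarith)).1).const_mul (r ^ 4 / 4))
      (hmeas _ Ioc_subset_Ioi_self measurableSet_Ioc) ?_
    refine (ae_restrict_iff' measurableSet_Ioc).2 (ae_of_all _ fun u ⟨hu, _⟩ => ?_)
    rw [norm_of_nonneg (phiIntegrand_nonneg r α ht hu)]
    calc phiIntegrand r α t u ≤ u ^ 2 * ((r * u) ^ 4 / 4 / u ^ (1 + 2 * α)) :=
          mul_le_mul (one_sub_exp_neg_mul_div_le ht)
            (div_le_div_of_nonneg_right (besselDiff_le_pow_four _) (rpow_nonneg hu.le _))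
            (hweight hu) (sq_nonneg u)
      _ = r ^ 4 / 4 * (u ^ (6 : ℝ) / u ^ (1 + 2 * α)) := by
          rw [show (6 : ℝ) = (6 : ℕ) by norm_num, rpow_natCast]; ring
      _ = r ^ 4 / 4 * u ^ (5 - 2 * α) := by rw [← rpow_sub hu]; ring_nf
  · refine Integrable.mono' ((integrableOn_Ioi_rpow_of_lt (a := -(1 + 2 * α)) (by linarith)
      one_pos).const_mul (4 * t⁻¹)) (hmeas _ (Ioi_subset_Ioi zero_le_one) measurableSet_Ioi) ?_
    refine (ae_restrict_iff' measurableSet_Ioi).2 (ae_of_all _ fun u (hu : 1 < u) => ?_)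
    have hu0 : 0 < u := one_pos.trans hu
    rw [norm_of_nonneg (phiIntegrand_nonneg r α ht hu0)]
    calc phiIntegrand r α t u ≤ t⁻¹ * (4 / u ^ (1 + 2 * α)) :=
          mul_le_mul (one_sub_exp_neg_mul_div_le_inv ht)
            (div_le_div_of_nonneg_right (besselDiff_le_four _) (rpow_nonneg hu0.le _))
            (hweight hu0) (inv_nonneg.2 ht.le)
      _ = 4 * t⁻¹ * u ^ (-(1 + 2 * α)) := by rw [rpow_neg hu0.le]; ring

theorem phiRA_eq_integral_phiIntegrand (r α : ℝ) {t : ℝ} (ht : 0 < t) :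
    phiRA r α t = 2 / π * ∫ u in Ioi 0, phiIntegrand r α t u := by
  have hc : 0 < √t := sqrt_pos.2 ht
  -- `(1 - α) + (1 + 2α)/2 = 1 + 1/2`
  have hpow : t ^ (1 - α) * √t ^ (1 + 2 * α) = t * √t := by
    rw [sqrt_eq_rpow, ← rpow_mul ht.le, ← rpow_add ht, ← rpow_one_add' ht.le (by positivity)]
    ring_nf
  unfold phiRA
  conv_lhs => rw [show Ioi (0 : ℝ) = Ioi (√t * 0) by rw [mul_zero]]
  rw [← integral_comp_mul_left_Ioi' _ _ hc, smul_eq_mul, ← mul_assoc,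
    ← integral_const_mul, ← integral_const_mul]
  refine setIntegral_congr_fun measurableSet_Ioi fun u (hu : 0 < u) => ?_
  simp only [phiIntegrand, besselDiff, mul_pow, sq_sqrt ht.le, mul_rpow hc.le hu.le]
  field_simp
  rw [mul_right_comm (t ^ (1 - α)), hpow]
  ring

theorem phiRA_pos {r α t : ℝ} (hr : 0 < r) (hα : 0 < α) (hα3 : α < 3) (ht : 0 < t) :
    0 < phiRA r α t := by
  rw [phiRA_eq_integral_phiIntegrand r α ht]
  refine mul_pos (by positivity) ?_
  calc (0 : ℝ) = ∫ _ in Ioi 0, 0 := by simp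
    _ < ∫ u in Ioi 0, phiIntegrand r α t u :=
      setIntegral_lt_setIntegral_of_le_of_lt_on measurableSet_Ioi Ioo_subset_Ioi_self
        (t := Ioo 0 (2 * π / r)) (by simp [pi_pos, hr]) integrableOn_zero
        (integrableOn_phiIntegrand r hα hα3 ht) (fun u hu => phiIntegrand_nonneg r α ht hu)
        fun u => phiIntegrand_pos α hr ht

theorem phiRA_strictAntiOn {r α : ℝ} (hr : 0 < r) (hα : 0 < α) (hα3 : α < 3) :
    StrictAntiOn (phiRA r α) (Ioi 0) := by
  intro s (hs : 0 < s) t (ht : 0 < t) hst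
  rw [phiRA_eq_integral_phiIntegrand r α hs, phiRA_eq_integral_phiIntegrand r α ht]
  refine mul_lt_mul_of_pos_left ?_ (by positivity)
  refine setIntegral_lt_setIntegral_of_le_of_lt_on measurableSet_Ioi Ioo_subset_Ioi_self
    (t := Ioo 0 (2 * π / r)) (by simp [pi_pos, hr]) (integrableOn_phiIntegrand r hα hα3 ht)
    (integrableOn_phiIntegrand r hα hα3 hs) (fun u hu => phiIntegrand_le_of_le r α hs hst.le hu)
    fun u => phiIntegrand_lt_of_lt α hr hs hst

theorem eq_of_exp_mul_eq_on {S : Set ℝ} {y₁ y₂ : ℝ} (h₁ : y₁ ∈ S) (h₂ : y₂ ∈ S) (hne : y₁ ≠ y₂)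
    {κ η p κ' η' p' : ℝ} (hp : 0 < p) (hp' : 0 < p')
    (h : ∀ y ∈ S, ∀ z ∈ S, exp (-κ * y - η * z) * p = exp (-κ' * y - η' * z) * p') :
    κ = κ' ∧ η = η' ∧ p = p' := by
  have hlog : ∀ y ∈ S, ∀ z ∈ S, -κ * y - η * z + log p = -κ' * y - η' * z + log p' :=
    fun y hy z hz => by
      simpa [log_mul (exp_ne_zero _) hp.ne', log_mul (exp_ne_zero _) hp'.ne']
        using congrArg log (h y hy z hz)
  have h11 := hlog _ h₁ _ h₁
  have h21 := hlog _ h₂ _ h₁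
  have h12 := hlog _ h₁ _ h₂
  have hsub : y₂ - y₁ ≠ 0 := sub_ne_zero.2 hne.symm
  have hκ : κ = κ' := mul_right_cancel₀ hsub (by linear_combination h11 - h21)
  have hη : η = η' := mul_right_cancel₀ hsub (by linear_combination h11 - h12)
  subst hκ hη
  exact ⟨rfl, rfl, log_injOn_pos hp hp' (by linarith)⟩

theorem statement19_general
    (b α r : ℝ) (hb2 : b < 1 / 2) (hα : 0 < α) (hα3 : α < 3) (hr : 0 < r) :
    (∀ θ2 : ℝ, 0 < θ2 → 0 < phiRA r α θ2) ∧
    ∀ κ η θ2 κ' η' θ2' : ℝ, 0 < θ2 → 0 < θ2' →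
      (∀ y ∈ Set.Icc b (1 - b), ∀ z ∈ Set.Icc b (1 - b),
        Real.exp (-κ * y - η * z) * phiRA r α θ2 =
          Real.exp (-κ' * y - η' * z) * phiRA r α θ2') →
      κ = κ' ∧ η = η' ∧ θ2 = θ2' := by
  refine ⟨fun θ2 => phiRA_pos hr hα hα3, fun κ η θ2 κ' η' θ2' hθ hθ' H => ?_⟩
  obtain ⟨hκ, hη, hφ⟩ := eq_of_exp_mul_eq_on (S := Icc b (1 - b)) ⟨le_rfl, by linarith⟩
    ⟨by linarith, le_rfl⟩ (by linarith : b < 1 - b).ne (phiRA_pos hr hα hα3 hθ)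
    (phiRA_pos hr hα hα3 hθ') H
  exact ⟨hκ, hη, (phiRA_strictAntiOn hr hα hα3).injOn hθ hθ' hφ⟩

/-- identifiability, proof of (i): `φ_{r,α}(θ2) > 0` for `θ2 > 0`, and if
`e^{−κy−ηz} φ_{r,α}(θ2) = e^{−κ*y−η*z} φ_{r,α}(θ2*)` for all `y, z ∈ [b, 1−b]`, then the
parameters coincide. -/
theorem statement19
    (b α r : ℝ) (hb : 0 < b) (hb2 : b < 1 / 2) (hα : 0 < α) (hα3 : α < 3) (hr : 0 < r) :
    (∀ θ2 : ℝ, 0 < θ2 → 0 < phiRA r α θ2) ∧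
    ∀ κ η θ2 κ' η' θ2' : ℝ, 0 < θ2 → 0 < θ2' →
      (∀ y ∈ Set.Icc b (1 - b), ∀ z ∈ Set.Icc b (1 - b),
        Real.exp (-κ * y - η * z) * phiRA r α θ2 =
          Real.exp (-κ' * y - η' * z) * phiRA r α θ2') →
      κ = κ' ∧ η = η' ∧ θ2 = θ2' :=
  statement19_general b α r hb2 hα hα3 hr
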